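/- Let P be an n×n nonnegative matrix and λ ≥ 0. Then λ is a distinguished eigenvalue of P for ℝ^n_+ (i.e. Px = λx for some nonzero x ∈ ℝ^n_+) if and only if there exists a distinguished class α of P with ρ(P_{αα}) = λ. -/

import Mathlib

set_option linter.unusedSectionVars false
set_option linter.unusedVariables false


open Matrix

/-- `i` has access to `j` in the digraph of `P` (edge `a → b` when `P a b > 0`). -/
def Access {n : ℕ} (P : Matrix (Fin n) (Fin n) ℝ) (i j : Fin n) : Prop :=
  Relation.ReflTransGen (fun a b => 0 < P a b) i j

/-- `α` is a class of `P`: a strongly connected component of the digraph of `P`. -/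
def IsClass {n : ℕ} (P : Matrix (Fin n) (Fin n) ℝ) (α : Finset (Fin n)) : Prop :=
  ∃ i ∈ α, ∀ j, j ∈ α ↔ (Access P i j ∧ Access P j i)

/-- Class `β` has access to class `α`. -/
def ClassAccess {n : ℕ} (P : Matrix (Fin n) (Fin n) ℝ) (β α : Finset (Fin n)) : Prop :=
  ∃ i ∈ β, ∃ j ∈ α, Access P i j

/-- Spectral radius (over `ℂ`) of the principal submatrix of `P` indexed by `α`. -/
noncomputable def subRad {n : ℕ} (P : Matrix (Fin n) (Fin n) ℝ) (α : Finset (Fin n)) : ℝ :=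
  sSup {r : ℝ | ∃ μ : ℂ,
    μ ∈ spectrum ℂ ((P.submatrix (fun i : {x // x ∈ α} => (i : Fin n)) (fun i : {x // x ∈ α} => (i : Fin n))).map (algebraMap ℝ ℂ)) ∧
    r = ‖μ‖}

/-- `α` is a distinguished class of `P`. -/
def IsDistinguishedClass {n : ℕ} (P : Matrix (Fin n) (Fin n) ℝ) (α : Finset (Fin n)) : Prop :=
  IsClass P α ∧ ∀ β, IsClass P β → β ≠ α → ClassAccess P β α → subRad P β < subRad P α

section Spec
variable {m : Type*} [Fintype m] [DecidableEq m]

lemma toLinAlg_basisFun (M : Matrix m m ℂ) (v : m → ℂ) :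
    Matrix.toLinAlgEquiv (Pi.basisFun ℂ m) M v = M.mulVec v := by
  rw [Matrix.toLinAlgEquiv_apply]
  funext i
  simp [Pi.basisFun_apply, Finset.sum_apply, Pi.single_apply, Matrix.mulVec,
    dotProduct, Pi.basisFun_repr]

lemma mem_spec_iff (M : Matrix m m ℂ) (μ : ℂ) :
    μ ∈ spectrum ℂ M ↔ ∃ v : m → ℂ, v ≠ 0 ∧ M.mulVec v = μ • v := by
  rw [← AlgEquiv.spectrum_eq (Matrix.toLinAlgEquiv <| Pi.basisFun ℂ m),
    ← Module.End.hasEigenvalue_iff_mem_spectrum]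
  constructor
  · intro h
    obtain ⟨v, hv⟩ := h.exists_hasEigenvector
    exact ⟨v, hv.2, by rw [← toLinAlg_basisFun M v, hv.apply_eq_smul]⟩
  · rintro ⟨v, hv0, hv⟩
    apply Module.End.hasEigenvalue_of_hasEigenvector (x := v)
    exact ⟨Module.End.mem_eigenspace_iff.2 (by rw [toLinAlg_basisFun M v, hv]), hv0⟩

lemma spec_nonempty [Nonempty m] (M : Matrix m m ℂ) : (spectrum ℂ M).Nonempty := by
  rw [← AlgEquiv.spectrum_eq (Matrix.toLinAlgEquiv <| Pi.basisFun ℂ m)]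
  obtain ⟨μ, hμ⟩ := Module.End.exists_eigenvalue (Matrix.toLinAlgEquiv (Pi.basisFun ℂ m) M)
  exact ⟨μ, Module.End.hasEigenvalue_iff_mem_spectrum.1 hμ⟩

/-- The set of absolute values of complex eigenvalues of a real matrix. -/
def specSet (A : Matrix m m ℝ) : Set ℝ :=
  {r : ℝ | ∃ μ : ℂ, μ ∈ spectrum ℂ (A.map (algebraMap ℝ ℂ)) ∧ r = ‖μ‖}

/-- The spectral radius of a real matrix. -/
noncomputable def rad (A : Matrix m m ℝ) : ℝ := sSup (specSet A)

lemma specSet_nonneg {A : Matrix m m ℝ} {r : ℝ} (hr : r ∈ specSet A) : 0 ≤ r := by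
  obtain ⟨μ, _, rfl⟩ := hr; exact norm_nonneg μ

lemma specSet_nonempty [Nonempty m] (A : Matrix m m ℝ) : (specSet A).Nonempty := by
  obtain ⟨μ, hμ⟩ := spec_nonempty (A.map (algebraMap ℝ ℂ))
  exact ⟨‖μ‖, μ, hμ, rfl⟩

lemma specSet_finite (A : Matrix m m ℝ) : (specSet A).Finite := by
  have h := Matrix.finite_spectrum (A.map (algebraMap ℝ ℂ))
  have : specSet A ⊆ (fun μ : ℂ => ‖μ‖) '' (spectrum ℂ (A.map (algebraMap ℝ ℂ))) := by
    rintro r ⟨μ, hμ, rfl⟩; exact ⟨μ, hμ, rfl⟩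
  exact (h.image _).subset this

/-- Collatz–Wielandt upper bound. -/
lemma cw_bound {A : Matrix m m ℝ} (hA : ∀ i j, 0 ≤ A i j) {x : m → ℝ}
    (hx : ∀ i, 0 < x i) {lam : ℝ} (h : ∀ i, ∑ j, A i j * x j ≤ lam * x i)
    {r : ℝ} (hr : r ∈ specSet A) : r ≤ lam := by
  obtain ⟨μ, hμ, rfl⟩ := hr
  obtain ⟨v, hv0, hv⟩ := (mem_spec_iff _ μ).1 hμ
  -- pick i maximizing ‖v i‖ / x i
  have hne : (Finset.univ : Finset m).Nonempty := by
    by_contra h'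
    apply hv0; funext i
    exact absurd (Finset.mem_univ i) (fun hh => h' ⟨i, hh⟩)
  obtain ⟨i, _, hi⟩ := Finset.exists_max_image Finset.univ (fun i => ‖v i‖ / x i) hne
  have hc : ∀ j, ‖v j‖ ≤ (‖v i‖ / x i) * x j := by
    intro j
    have := hi j (Finset.mem_univ j)
    calc ‖v j‖ = (‖v j‖ / x j) * x j := (div_mul_cancel₀ _ (hx j).ne').symm
    _ ≤ (‖v i‖ / x i) * x j := mul_le_mul_of_nonneg_right this (le_of_lt (hx j))
  have hci : 0 < ‖v i‖ := by
    by_contra h'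
    push_neg at h'
    have hvi : ‖v i‖ = 0 := le_antisymm h' (norm_nonneg _)
    apply hv0; funext j
    have := hc j
    rw [hvi] at this
    simp only [zero_div, zero_mul] at this
    exact norm_le_zero_iff.1 (this.trans_eq rfl)
  -- main estimate
  have key : ‖μ‖ * ‖v i‖ ≤ lam * ‖v i‖ := by
    have h1 : ‖μ‖ * ‖v i‖ = ‖(A.map (algebraMap ℝ ℂ)).mulVec v i‖ := by
      rw [hv]; simp [norm_smul]
    have h2 : ‖(A.map (algebraMap ℝ ℂ)).mulVec v i‖ ≤ ∑ j, A i j * ‖v j‖ := by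
      refine (norm_sum_le _ _).trans ?_
      apply Finset.sum_le_sum
      intro j _
      rw [norm_mul]
      simp only [Matrix.map_apply]
      have : ‖(algebraMap ℝ ℂ) (A i j)‖ = |A i j| := by
        rw [show (algebraMap ℝ ℂ) (A i j) = ((A i j : ℝ) : ℂ) from rfl, Complex.norm_real, Real.norm_eq_abs]
      rw [this, abs_of_nonneg (hA i j)]
    have h3 : ∑ j, A i j * ‖v j‖ ≤ (‖v i‖ / x i) * ∑ j, A i j * x j := by
      rw [Finset.mul_sum]
      apply Finset.sum_le_sum
      intro j _
      calc A i j * ‖v j‖ ≤ A i j * ((‖v i‖ / x i) * x j) :=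
            mul_le_mul_of_nonneg_left (hc j) (hA i j)
      _ = (‖v i‖ / x i) * (A i j * x j) := by ring
    have h4 : (‖v i‖ / x i) * ∑ j, A i j * x j ≤ (‖v i‖ / x i) * (lam * x i) := by
      exact mul_le_mul_of_nonneg_left (h i) (div_nonneg (norm_nonneg _) (hx i).le)
    have h5 : (‖v i‖ / x i) * (lam * x i) = lam * ‖v i‖ := by
      field_simp [(hx i).ne']
    linarith [h1, h2, h3, h4, h5]
  exact le_of_mul_le_mul_right (by linarith [key]) hci

lemma bddAbove_specSet {A : Matrix m m ℝ} (hA : ∀ i j, 0 ≤ A i j) :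
    BddAbove (specSet A) := by
  refine ⟨∑ i, ∑ j, A i j, fun r hr => ?_⟩
  refine cw_bound hA (x := fun _ => 1) (fun _ => one_pos) (fun i => ?_) hr
  simp only [mul_one]
  exact Finset.single_le_sum (f := fun k => ∑ j, A k j)
    (fun k _ => Finset.sum_nonneg fun j _ => hA k j) (Finset.mem_univ i)

lemma rad_le {A : Matrix m m ℝ} [Nonempty m] (hA : ∀ i j, 0 ≤ A i j) {x : m → ℝ}
    (hx : ∀ i, 0 < x i) {lam : ℝ} (h : ∀ i, ∑ j, A i j * x j ≤ lam * x i) :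
    rad A ≤ lam :=
  csSup_le (specSet_nonempty A) (fun _ hr => cw_bound hA hx h hr)

lemma mem_specSet {A : Matrix m m ℝ} {x : m → ℝ} (hx0 : x ≠ 0) {lam : ℝ} (hlam : 0 ≤ lam)
    (h : ∀ i, ∑ j, A i j * x j = lam * x i) : lam ∈ specSet A := by
  refine ⟨(lam : ℂ), ?_, by simp [abs_of_nonneg hlam]⟩
  rw [mem_spec_iff]
  refine ⟨fun j => (x j : ℂ), ?_, ?_⟩
  · intro hz
    apply hx0; funext j
    have := congrFun hz j
    simpa using this
  · funext i
    simp only [Matrix.mulVec, dotProduct, Matrix.map_apply, Pi.smul_apply, smul_eq_mul]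
    have h2 : ((∑ j, A i j * x j : ℝ) : ℂ) = ((lam * x i : ℝ) : ℂ) := by rw [h i]
    push_cast at h2
    simpa using h2

lemma rad_eq [Nonempty m] {A : Matrix m m ℝ} (hA : ∀ i j, 0 ≤ A i j) {x : m → ℝ}
    (hx : ∀ i, 0 < x i) {lam : ℝ} (h : ∀ i, ∑ j, A i j * x j = lam * x i) :
    rad A = lam := by
  have hm : Nonempty m := inferInstance
  · have hlam : 0 ≤ lam := by
      obtain ⟨i⟩ := hm
      have h1 : 0 ≤ ∑ j, A i j * x j :=
        Finset.sum_nonneg fun j _ => mul_nonneg (hA i j) (le_of_lt (hx j))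
      nlinarith [hx i, h i]
    apply le_antisymm
    · exact rad_le hA hx (fun i => le_of_eq (h i))
    · exact le_csSup (bddAbove_specSet hA)
        (mem_specSet (fun hz => absurd (congrFun hz (Classical.arbitrary m))
          (by simpa using (hx (Classical.arbitrary m)).ne')) hlam h)


lemma rad_lt [Nonempty m] {A : Matrix m m ℝ} (hA : ∀ i j, 0 ≤ A i j)
    (hSC : ∀ i j : m, Relation.ReflTransGen (fun a b => 0 < A a b) i j)
    {x : m → ℝ} (hx : ∀ i, 0 < x i) {lam : ℝ} (h : ∀ i, ∑ j, A i j * x j ≤ lam * x i)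
    {i₀ : m} (hstrict : ∑ j, A i₀ j * x j < lam * x i₀) : rad A < lam := by
  have hmem : rad A ∈ specSet A := (specSet_nonempty A).csSup_mem (specSet_finite A)
  obtain ⟨μ, hμ, hradeq⟩ := hmem
  rw [hradeq]
  by_contra hge
  push_neg at hge
  obtain ⟨v, hv0, hv⟩ := (mem_spec_iff _ μ).1 hμ
  obtain ⟨imax, _, hi⟩ := Finset.exists_max_image Finset.univ (fun i => ‖v i‖ / x i)
    Finset.univ_nonempty
  set c := ‖v imax‖ / x imax with hcdef
  have hc : ∀ j, ‖v j‖ ≤ c * x j := by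
    intro j
    calc ‖v j‖ = (‖v j‖ / x j) * x j := (div_mul_cancel₀ _ (hx j).ne').symm
    _ ≤ c * x j := mul_le_mul_of_nonneg_right (hi j (Finset.mem_univ j)) (le_of_lt (hx j))
  have hci : 0 < ‖v imax‖ := by
    by_contra h'
    push_neg at h'
    have hvi : ‖v imax‖ = 0 := le_antisymm h' (norm_nonneg _)
    apply hv0; funext j
    have := hc j
    rw [hcdef, hvi] at this
    simp only [zero_div, zero_mul] at this
    exact norm_le_zero_iff.1 this
  have hcpos : 0 < c := div_pos hci (hx imax)
  have heq : ‖μ‖ = lam := le_antisymm (cw_bound hA hx h ⟨μ, hμ, rfl⟩) hge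
  have main : ∀ k, ‖v k‖ = c * x k →
      (∑ j, A k j * x j = lam * x k) ∧ ∀ j, 0 < A k j → ‖v j‖ = c * x j := by
    intro k hk
    have t1 : ‖μ‖ * ‖v k‖ = ‖(A.map (algebraMap ℝ ℂ)).mulVec v k‖ := by
      rw [hv]; simp [norm_smul]
    have t2 : ‖(A.map (algebraMap ℝ ℂ)).mulVec v k‖ ≤ ∑ j, A k j * ‖v j‖ := by
      refine (norm_sum_le _ _).trans ?_
      refine Finset.sum_le_sum fun j _ => ?_
      rw [norm_mul]
      simp only [Matrix.map_apply]
      rw [show (algebraMap ℝ ℂ) (A k j) = ((A k j : ℝ) : ℂ) from rfl, Complex.norm_real,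
        Real.norm_eq_abs, abs_of_nonneg (hA k j)]
    have t3 : ∑ j, A k j * ‖v j‖ ≤ ∑ j, A k j * (c * x j) :=
      Finset.sum_le_sum fun j _ => mul_le_mul_of_nonneg_left (hc j) (hA k j)
    have t4 : ∑ j, A k j * (c * x j) = c * ∑ j, A k j * x j := by
      rw [Finset.mul_sum]; exact Finset.sum_congr rfl fun j _ => by ring
    have t5 : c * ∑ j, A k j * x j ≤ c * (lam * x k) :=
      mul_le_mul_of_nonneg_left (h k) hcpos.le
    have t6 : ‖μ‖ * ‖v k‖ = c * (lam * x k) := by rw [heq, hk]; ring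
    have erow : c * ∑ j, A k j * x j = c * (lam * x k) := by linarith
    have esum : ∑ j, A k j * ‖v j‖ = ∑ j, A k j * (c * x j) := by linarith
    constructor
    · exact mul_left_cancel₀ hcpos.ne' erow
    · intro j hj
      by_contra hne
      have hlt : A k j * ‖v j‖ < A k j * (c * x j) :=
        mul_lt_mul_of_pos_left (lt_of_le_of_ne (hc j) hne) hj
      have : ∑ j, A k j * ‖v j‖ < ∑ j, A k j * (c * x j) :=
        Finset.sum_lt_sum (fun j _ => mul_le_mul_of_nonneg_left (hc j) (hA k j))
          ⟨j, Finset.mem_univ j, hlt⟩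
      linarith
  have hE : ∀ k, Relation.ReflTransGen (fun a b => 0 < A a b) imax k → ‖v k‖ = c * x k := by
    intro k hpath
    induction hpath with
    | refl => exact (div_mul_cancel₀ _ (hx imax).ne').symm
    | tail hab hbc ih => exact (main _ ih).2 _ hbc
  have := (main i₀ (hE i₀ (hSC imax i₀))).1
  linarith


/-- Solving `(lam - A) w = c` with a nonnegative solution, given a strictly subinvariant
positive vector. -/
lemma solve_nonneg {A : Matrix m m ℝ} (hA : ∀ i j, 0 ≤ A i j) {z : m → ℝ}
    (hz : ∀ i, 0 < z i) {lam : ℝ} (hlt : ∀ i, ∑ j, A i j * z j < lam * z i)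
    {c : m → ℝ} (hc : ∀ i, 0 ≤ c i) :
    ∃ w : m → ℝ, (∀ i, 0 ≤ w i) ∧ ∀ i, ∑ j, A i j * w j + c i = lam * w i := by
  rcases isEmpty_or_nonempty m with hm | hm
  · exact ⟨0, fun i => (IsEmpty.false i).elim, fun i => (IsEmpty.false i).elim⟩
  · set L : (m → ℝ) →ₗ[ℝ] (m → ℝ) := lam • LinearMap.id - A.mulVecLin with hL
    have hLapp : ∀ v i, L v i = lam * v i - ∑ j, A i j * v j := by
      intro v i
      simp only [hL, LinearMap.sub_apply, LinearMap.smul_apply, LinearMap.id_apply,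
        Pi.sub_apply, Pi.smul_apply, smul_eq_mul, Matrix.mulVecLin_apply, Matrix.mulVec,
        dotProduct]
    have hinj : Function.Injective L := by
      rw [← LinearMap.ker_eq_bot, LinearMap.ker_eq_bot']
      intro v hv
      by_contra hv0
      have heig : ∀ i, lam * v i = ∑ j, A i j * v j := by
        intro i
        have := congrFun hv i
        rw [hLapp] at this
        simp only [Pi.zero_apply] at this
        linarith
      obtain ⟨imax, _, hi⟩ := Finset.exists_max_image Finset.univ (fun i => |v i| / z i)
        Finset.univ_nonempty
      set c0 := |v imax| / z imax with hc0def
      have hcb : ∀ j, |v j| ≤ c0 * z j := by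
        intro j
        calc |v j| = (|v j| / z j) * z j := (div_mul_cancel₀ _ (hz j).ne').symm
        _ ≤ c0 * z j := mul_le_mul_of_nonneg_right (hi j (Finset.mem_univ j)) (hz j).le
      have hci : 0 < |v imax| := by
        by_contra h'
        push_neg at h'
        have hvi : |v imax| = 0 := le_antisymm h' (abs_nonneg _)
        apply hv0; funext j
        have := hcb j
        rw [hc0def, hvi] at this
        simp only [zero_div, zero_mul] at this
        exact abs_nonpos_iff.1 this
      have hc0 : 0 < c0 := div_pos hci (hz imax)
      have hvm : |v imax| = c0 * z imax := (div_mul_cancel₀ _ (hz imax).ne').symm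
      have e1 : |lam| * |v imax| = |∑ j, A imax j * v j| := by
        rw [← abs_mul, heig imax]
      have e2 : |∑ j, A imax j * v j| ≤ ∑ j, A imax j * |v j| := by
        refine (Finset.abs_sum_le_sum_abs _ _).trans ?_
        refine Finset.sum_le_sum fun j _ => ?_
        rw [abs_mul, abs_of_nonneg (hA imax j)]
      have e3 : ∑ j, A imax j * |v j| ≤ c0 * ∑ j, A imax j * z j := by
        rw [Finset.mul_sum]
        refine Finset.sum_le_sum fun j _ => ?_
        calc A imax j * |v j| ≤ A imax j * (c0 * z j) :=
              mul_le_mul_of_nonneg_left (hcb j) (hA imax j)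
        _ = c0 * (A imax j * z j) := by ring
      have e4 : c0 * ∑ j, A imax j * z j < c0 * (lam * z imax) :=
        mul_lt_mul_of_pos_left (hlt imax) hc0
      have e5 : lam ≤ |lam| := le_abs_self lam
      have e6 : c0 * (lam * z imax) = lam * |v imax| := by rw [hvm]; ring
      have e7 : lam * |v imax| ≤ |lam| * |v imax| :=
        mul_le_mul_of_nonneg_right e5 (abs_nonneg _)
      linarith
    obtain ⟨w, hw⟩ := (LinearMap.injective_iff_surjective.1 hinj) c
    refine ⟨w, ?_, ?_⟩
    · -- nonnegativity of w
      by_contra hneg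
      push_neg at hneg
      obtain ⟨i1, hi1⟩ := hneg
      obtain ⟨imin, _, hmin⟩ := Finset.exists_min_image Finset.univ (fun i => w i / z i)
        Finset.univ_nonempty
      have hm0 : w imin / z imin < 0 :=
        lt_of_le_of_lt (hmin i1 (Finset.mem_univ i1)) (div_neg_of_neg_of_pos hi1 (hz i1))
      set m0 := -(w imin / z imin) with hm0def
      have hm0pos : 0 < m0 := by simp [hm0def]; linarith
      have hwm : w imin = -(m0 * z imin) := by
        rw [hm0def]
        have := div_mul_cancel₀ (w imin) (hz imin).ne'
        linarith
      have hwge : ∀ j, w j + m0 * z j ≥ 0 := by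
        intro j
        have := hmin j (Finset.mem_univ j)
        have h2 : w j / z j ≥ -m0 := by rw [hm0def]; linarith
        have h3 : w j ≥ -m0 * z j := by
          calc w j = (w j / z j) * z j := (div_mul_cancel₀ _ (hz j).ne').symm
          _ ≥ -m0 * z j := mul_le_mul_of_nonneg_right h2 (hz j).le
        linarith
      have hAw : ∑ j, A imin j * w j ≥ -(m0 * ∑ j, A imin j * z j) := by
        have : ∑ j, A imin j * w j + m0 * ∑ j, A imin j * z j
            = ∑ j, A imin j * (w j + m0 * z j) := by
          rw [Finset.mul_sum, ← Finset.sum_add_distrib]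
          exact Finset.sum_congr rfl fun j _ => by ring
        have hpos : 0 ≤ ∑ j, A imin j * (w j + m0 * z j) :=
          Finset.sum_nonneg fun j _ => mul_nonneg (hA imin j) (hwge j)
        linarith
      have heq : lam * w imin = ∑ j, A imin j * w j + c imin := by
        have := congrFun hw imin
        rw [hLapp] at this
        linarith
      have hfin : lam * w imin > -(m0 * (lam * z imin)) := by
        have := mul_lt_mul_of_pos_left (hlt imin) hm0pos
        linarith [hc imin]
      rw [hwm] at hfin
      linarith
    · intro i
      have := congrFun hw i
      rw [hLapp] at this
      linarith


lemma mv_apply (A : Matrix m m ℝ) (v : m → ℝ) (i : m) :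
    A.mulVec v i = ∑ j, A i j * v j := rfl

lemma pow_entries_nonneg {B : Matrix m m ℝ} (hB : ∀ i j, 0 ≤ B i j) (k : ℕ) :
    ∀ i j, 0 ≤ (B ^ k) i j := by
  induction k with
  | zero =>
    intro i j
    simp only [pow_zero, Matrix.one_apply]
    split <;> norm_num
  | succ k ih =>
    intro i j
    rw [pow_succ, Matrix.mul_apply]
    exact Finset.sum_nonneg fun l _ => mul_nonneg (ih i l) (hB l j)

lemma one_add_entries_nonneg {A : Matrix m m ℝ} (hA : ∀ i j, 0 ≤ A i j) :
    ∀ i j, 0 ≤ (1 + A) i j := by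
  intro i j
  simp only [Matrix.add_apply, Matrix.one_apply]
  split <;> [linarith [hA i j]; linarith [hA i j]]

/-- positivity of `(1+A)^card m *ᵥ v` for strongly connected nonneg `A`, `v ≥ 0`, `v ≠ 0`. -/
lemma pow_one_add_pos [Nonempty m] {A : Matrix m m ℝ} (hA : ∀ i j, 0 ≤ A i j)
    (hSC : ∀ i j : m, Relation.ReflTransGen (fun a b => 0 < A a b) i j)
    {v : m → ℝ} (hv : ∀ i, 0 ≤ v i) (hv0 : v ≠ 0) :
    ∀ i, 0 < (((1 + A) ^ (Fintype.card m)).mulVec v) i := by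
  classical
  set w : ℕ → m → ℝ := fun k => ((1 + A) ^ k).mulVec v with hwdef
  have hwnn : ∀ k i, 0 ≤ w k i := by
    intro k i
    rw [hwdef]
    simp only [mv_apply]
    exact Finset.sum_nonneg fun j _ =>
      mul_nonneg (pow_entries_nonneg (one_add_entries_nonneg hA) k i j) (hv j)
  have hrec : ∀ k, w (k + 1) = w k + A.mulVec (w k) := by
    intro k
    rw [hwdef]
    simp only
    rw [pow_succ', ← Matrix.mulVec_mulVec, Matrix.add_mulVec, Matrix.one_mulVec]
  have hmono : ∀ k i, 0 < w k i → 0 < w (k + 1) i := by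
    intro k i h
    rw [hrec]
    have : 0 ≤ A.mulVec (w k) i := by
      rw [mv_apply]
      exact Finset.sum_nonneg fun j _ => mul_nonneg (hA i j) (hwnn k j)
    simp only [Pi.add_apply]
    linarith
  have hedge : ∀ k i j, 0 < A i j → 0 < w k j → 0 < w (k + 1) i := by
    intro k i j hij hkj
    rw [hrec]
    simp only [Pi.add_apply]
    have h1 : 0 < A.mulVec (w k) i := by
      rw [mv_apply]
      have : 0 < A i j * w k j := mul_pos hij hkj
      have hle : A i j * w k j ≤ ∑ l, A i l * w k l :=
        Finset.single_le_sum (f := fun l => A i l * w k l)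
          (fun l _ => mul_nonneg (hA i l) (hwnn k l)) (Finset.mem_univ j)
      linarith
    linarith [hwnn k i]
  set supp : ℕ → Finset m := fun k => Finset.univ.filter (fun i => 0 < w k i) with hsupp
  have hsuppmono : ∀ k, supp k ⊆ supp (k + 1) := by
    intro k i hi
    simp only [hsupp, Finset.mem_filter, Finset.mem_univ, true_and] at hi ⊢
    exact hmono k i hi
  have hbdry : ∀ (S : Finset m) (i j : m), i ∉ S → j ∈ S →
      Relation.ReflTransGen (fun a b => 0 < A a b) i j →
      ∃ a ∉ S, ∃ b ∈ S, 0 < A a b := by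
    intro S i j hiS hjS hpath
    induction hpath with
    | refl => exact absurd hjS hiS
    | @tail b c hib hbc ih =>
      by_cases hb : b ∈ S
      · exact ih hb
      · exact ⟨b, hb, c, hjS, hbc⟩
  have hne0 : (supp 0).Nonempty := by
    obtain ⟨i, hi⟩ : ∃ i, v i ≠ 0 := Function.ne_iff.1 hv0
    refine ⟨i, ?_⟩
    simp only [hsupp, Finset.mem_filter, Finset.mem_univ, true_and]
    have : w 0 = v := by rw [hwdef]; simp [Matrix.one_mulVec]
    rw [this]
    exact lt_of_le_of_ne (hv i) (Ne.symm hi)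
  have hcard : ∀ k, min (Fintype.card m) (k + 1) ≤ (supp k).card := by
    intro k
    induction k with
    | zero =>
      have := Finset.card_pos.2 hne0
      exact le_trans (min_le_right _ _) this
    | succ k ih =>
      by_cases hfull : supp k = Finset.univ
      · have h1 : Finset.univ ⊆ supp (k+1) := by rw [← hfull]; exact hsuppmono k
        have h2 : Fintype.card m ≤ (supp (k+1)).card := by
          calc Fintype.card m = Finset.univ.card := Finset.card_univ.symm
          _ ≤ _ := Finset.card_le_card h1
        exact le_trans (min_le_left _ _) h2
      · obtain ⟨i, hi⟩ : ∃ i, i ∉ supp k := by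
          by_contra hcon
          push_neg at hcon
          exact hfull (Finset.eq_univ_iff_forall.2 hcon)
        have hnek : (supp k).Nonempty := by
          obtain ⟨j, hj⟩ := hne0
          refine ⟨j, ?_⟩
          have hsub : supp 0 ⊆ supp k := by
            clear hi hfull ih
            induction k with
            | zero => exact subset_rfl
            | succ k ihk => exact ihk.trans (hsuppmono k)
          exact hsub hj
        obtain ⟨j₀, hj₀⟩ := hnek
        obtain ⟨a, haS, b, hbS, hab⟩ := hbdry (supp k) i j₀ hi hj₀ (hSC i j₀)
        have hak1 : a ∈ supp (k + 1) := by
          simp only [hsupp, Finset.mem_filter, Finset.mem_univ, true_and] at hbS ⊢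
          exact hedge k a b hab hbS
        have hgrow : (supp k).card + 1 ≤ (supp (k+1)).card := by
          have hins : insert a (supp k) ⊆ supp (k + 1) := by
            intro t ht
            rcases Finset.mem_insert.1 ht with h | h
            · rw [h]; exact hak1
            · exact hsuppmono k h
          calc (supp k).card + 1 = (insert a (supp k)).card :=
                (Finset.card_insert_of_notMem haS).symm
          _ ≤ _ := Finset.card_le_card hins
        have hcle : (supp k).card ≤ Fintype.card m := Finset.card_le_univ (supp k)
        omega
  intro i
  have hN := hcard (Fintype.card m)
  have : supp (Fintype.card m) = Finset.univ := by
    apply Finset.eq_univ_of_card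
    have hcle : (supp (Fintype.card m)).card ≤ Fintype.card m :=
      Finset.card_le_univ (supp (Fintype.card m))
    omega
  have hi : i ∈ supp (Fintype.card m) := this ▸ Finset.mem_univ i
  simp only [hsupp, Finset.mem_filter, Finset.mem_univ, true_and] at hi
  simpa [hwdef] using hi


/-- Perron–Frobenius: an irreducible nonnegative matrix has a positive eigenvector whose
eigenvalue is the spectral radius. -/
lemma pf_exists [Nonempty m] {A : Matrix m m ℝ} (hA : ∀ i j, 0 ≤ A i j)
    (hSC : ∀ i j : m, Relation.ReflTransGen (fun a b => 0 < A a b) i j) :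
    ∃ x : m → ℝ, (∀ i, 0 < x i) ∧ ∀ i, ∑ j, A i j * x j = rad A * x i := by
  classical
  set C : ℝ := ∑ i, ∑ j, A i j with hCdef
  have hC0 : 0 ≤ C := Finset.sum_nonneg fun i _ => Finset.sum_nonneg fun j _ => hA i j
  -- the bound lemma
  have hbound : ∀ (p : m → ℝ) (t : ℝ), (∀ i, 0 ≤ p i) → ∑ i, p i = 1 →
      (∀ i, t * p i ≤ ∑ j, A i j * p j) → t ≤ C := by
    intro p t hp hsum hle
    have hple : ∀ j, p j ≤ 1 := by
      intro j
      rw [← hsum]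
      exact Finset.single_le_sum (f := p) (fun i _ => hp i) (Finset.mem_univ j)
    calc t = t * ∑ i, p i := by rw [hsum, mul_one]
    _ = ∑ i, t * p i := Finset.mul_sum _ _ _
    _ ≤ ∑ i, ∑ j, A i j * p j := Finset.sum_le_sum fun i _ => hle i
    _ ≤ ∑ i, ∑ j, A i j := by
        refine Finset.sum_le_sum fun i _ => Finset.sum_le_sum fun j _ => ?_
        calc A i j * p j ≤ A i j * 1 := mul_le_mul_of_nonneg_left (hple j) (hA i j)
        _ = A i j := mul_one _
  set K : Set ((m → ℝ) × ℝ) :=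
    (stdSimplex ℝ m ×ˢ Set.Icc (0:ℝ) C) ∩ {p | ∀ i, p.2 * p.1 i ≤ ∑ j, A i j * p.1 j}
    with hKdef
  have hKcl : IsClosed {p : (m → ℝ) × ℝ | ∀ i, p.2 * p.1 i ≤ ∑ j, A i j * p.1 j} := by
    have : {p : (m → ℝ) × ℝ | ∀ i, p.2 * p.1 i ≤ ∑ j, A i j * p.1 j}
        = ⋂ i, {p : (m → ℝ) × ℝ | p.2 * p.1 i ≤ ∑ j, A i j * p.1 j} := by
      ext p; simp [Set.mem_iInter]
    rw [this]
    refine isClosed_iInter fun i => isClosed_le ?_ ?_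
    · exact continuous_snd.mul ((continuous_apply i).comp continuous_fst)
    · exact continuous_finset_sum _ fun j _ =>
        continuous_const.mul ((continuous_apply j).comp continuous_fst)
  have hKcomp : IsCompact K :=
    ((isCompact_stdSimplex (𝕜 := ℝ) (ι := m)).prod isCompact_Icc).inter_right hKcl
  have hKne : K.Nonempty := by
    refine ⟨(fun _ => (Fintype.card m : ℝ)⁻¹, 0), ⟨⟨?_, ?_⟩, ?_⟩, ?_⟩
    · intro i
      positivity
    · rw [Finset.sum_const, Finset.card_univ, nsmul_eq_mul]
      rw [mul_inv_cancel₀]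
      exact_mod_cast Fintype.card_ne_zero
    · exact ⟨le_refl 0, hC0⟩
    · intro i
      simp only [zero_mul]
      exact Finset.sum_nonneg fun j _ => mul_nonneg (hA i j) (by positivity)
  obtain ⟨p, hpK, hpmax⟩ := hKcomp.exists_isMaxOn hKne continuous_snd.continuousOn
  obtain ⟨⟨⟨hx1, hx2⟩, ⟨ht0, _⟩⟩, hcons⟩ := hpK
  set x := p.1 with hxdef
  set t := p.2 with htdef
  have hx0 : x ≠ 0 := by
    intro h
    rw [h] at hx2
    simp at hx2
  set N := Fintype.card m with hNdef
  set B : Matrix m m ℝ := (1 + A) ^ N with hBdef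
  set y := B.mulVec x with hydef
  have hy : ∀ i, 0 < y i := pow_one_add_pos hA hSC hx1 hx0
  have hcomm : A * B = B * A := by
    have h1 : Commute A (1 + A) := Commute.add_right (Commute.one_right A) rfl
    exact (h1.pow_right N).eq
  have hAyBAx : A.mulVec y = B.mulVec (A.mulVec x) := by
    rw [hydef, Matrix.mulVec_mulVec, hcomm, ← Matrix.mulVec_mulVec]
  -- first: x is an eigenvector with eigenvalue t
  have heig : ∀ i, ∑ j, A i j * x j = t * x i := by
    by_contra hcon
    push_neg at hcon
    obtain ⟨i₀, hi₀⟩ := hcon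
    set d : m → ℝ := fun i => (∑ j, A i j * x j) - t * x i with hddef
    have hd0 : ∀ i, 0 ≤ d i := fun i => by simp only [hddef]; linarith [hcons i]
    have hdne : d ≠ 0 := by
      intro h
      apply hi₀
      have := congrFun h i₀
      simp only [hddef, Pi.zero_apply] at this
      linarith
    set q := B.mulVec d with hqdef
    have hq : ∀ i, 0 < q i := pow_one_add_pos hA hSC hd0 hdne
    have hkey : ∀ i, A.mulVec y i = t * y i + q i := by
      intro i
      have hdvec : d = A.mulVec x - t • x := by
        funext i; simp [hddef, mv_apply, Pi.sub_apply, Pi.smul_apply, smul_eq_mul]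
      have : q = A.mulVec y - t • y := by
        rw [hqdef, hdvec, Matrix.mulVec_sub, Matrix.mulVec_smul, hAyBAx, hydef]
      have := congrFun this i
      simp only [Pi.sub_apply, Pi.smul_apply, smul_eq_mul] at this
      linarith
    obtain ⟨iε, _, hiε⟩ := Finset.exists_min_image Finset.univ (fun i => q i / y i)
      Finset.univ_nonempty
    set ε := q iε / y iε with hεdef
    have hεpos : 0 < ε := div_pos (hq iε) (hy iε)
    have hεle : ∀ i, ε * y i ≤ q i := by
      intro i
      have h1 := hiε i (Finset.mem_univ i)
      calc ε * y i ≤ (q i / y i) * y i := mul_le_mul_of_nonneg_right h1 (hy i).le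
      _ = q i := div_mul_cancel₀ _ (hy i).ne'
    set s := ∑ i, y i with hsdef
    have hspos : 0 < s := Finset.sum_pos (fun i _ => hy i) Finset.univ_nonempty
    set y' : m → ℝ := fun i => y i / s with hy'def
    have hcons' : ∀ i, (t + ε) * (y i / s) ≤ ∑ j, A i j * (y j / s) := by
      intro i
      have h1 : (t + ε) * y i ≤ ∑ j, A i j * y j := by
        have := hkey i
        rw [mv_apply] at this
        nlinarith [hεle i]
      have h3 : ∑ j, A i j * (y j / s) = (∑ j, A i j * y j) / s := by
        rw [Finset.sum_div]
        exact Finset.sum_congr rfl fun j _ => (mul_div_assoc _ _ _).symm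
      rw [h3, ← mul_div_assoc]
      exact (div_le_div_iff_of_pos_right hspos).2 h1
    have hy'sum : ∑ i, y' i = 1 := by
      rw [hy'def]
      simp only
      rw [← Finset.sum_div, ← hsdef, div_self hspos.ne']
    have hy'nn : ∀ i, 0 ≤ y' i := fun i => le_of_lt (div_pos (hy i) hspos)
    have hy'mem : (y', t + ε) ∈ K := by
      refine ⟨⟨⟨hy'nn, hy'sum⟩, ⟨?_, ?_⟩⟩, ?_⟩
      · show (0:ℝ) ≤ t + ε
        linarith
      · show t + ε ≤ C
        exact hbound y' (t + ε) hy'nn hy'sum hcons'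
      · exact hcons'
    have hfin : t + ε ≤ t := hpmax hy'mem
    linarith
  -- now y is a positive eigenvector
  have heigy : ∀ i, ∑ j, A i j * y j = t * y i := by
    have hAx : A.mulVec x = t • x := by
      funext i
      rw [mv_apply, heig i]
      simp
    have : A.mulVec y = t • y := by
      rw [hAyBAx, hAx, Matrix.mulVec_smul, hydef]
    intro i
    have := congrFun this i
    rw [mv_apply] at this
    simpa using this
  have hrad : rad A = t := rad_eq hA hy heigy
  exact ⟨y, hy, fun i => by rw [hrad]; exact heigy i⟩

end Spec

/-! ### Graph lemmas -/

open Matrix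

section Graph
variable {n : ℕ} (P : Matrix (Fin n) (Fin n) ℝ)

lemma subRad_eq_rad (α : Finset (Fin n)) :
    subRad P α = rad (P.submatrix (fun i : {x // x ∈ α} => (i : Fin n))
      (fun i : {x // x ∈ α} => (i : Fin n))) := rfl

open scoped Classical in
noncomputable def classOf (i : Fin n) : Finset (Fin n) :=
  Finset.univ.filter (fun j => Access P i j ∧ Access P j i)

variable {P}

lemma mem_classOf {i j : Fin n} : j ∈ classOf P i ↔ Access P i j ∧ Access P j i := by
  simp [classOf]

lemma self_mem_classOf (i : Fin n) : i ∈ classOf P i :=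
  mem_classOf.2 ⟨Relation.ReflTransGen.refl, Relation.ReflTransGen.refl⟩

lemma isClass_classOf (i : Fin n) : IsClass P (classOf P i) :=
  ⟨i, self_mem_classOf i, fun _ => mem_classOf⟩

lemma class_eq_classOf {α : Finset (Fin n)} (hα : IsClass P α) {i : Fin n} (hi : i ∈ α) :
    α = classOf P i := by
  obtain ⟨w, hw, hmem⟩ := hα
  have hwi := (hmem i).1 hi
  ext j
  rw [hmem j, mem_classOf]
  constructor
  · rintro ⟨h1, h2⟩
    exact ⟨hwi.2.trans h1, h2.trans hwi.1⟩
  · rintro ⟨h1, h2⟩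
    exact ⟨hwi.1.trans h1, h2.trans hwi.2⟩

lemma class_eq_of_mem {α β : Finset (Fin n)} (hα : IsClass P α) (hβ : IsClass P β)
    {i : Fin n} (hiα : i ∈ α) (hiβ : i ∈ β) : α = β := by
  rw [class_eq_classOf hα hiα, class_eq_classOf hβ hiβ]

lemma class_nonempty {α : Finset (Fin n)} (hα : IsClass P α) : α.Nonempty := by
  obtain ⟨w, hw, _⟩ := hα
  exact ⟨w, hw⟩

/-- paths between members of a class can be taken within the class -/
lemma class_path_within {α : Finset (Fin n)} (hα : IsClass P α) :
    ∀ i j : Fin n, Access P i j → ∀ (hi : i ∈ α) (hj : j ∈ α),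
      Relation.ReflTransGen (fun u v : {x // x ∈ α} => 0 < P u.1 v.1) ⟨i, hi⟩ ⟨j, hj⟩ := by
  obtain ⟨w, hw, hmem⟩ := hα
  intro i j hpath
  induction hpath with
  | refl => intro hi hj; exact Relation.ReflTransGen.refl
  | @tail b c hib hbc ih =>
    intro hi hj
    have hwb := (hmem i).1 hi
    have hwc := (hmem c).1 hj
    have hb : b ∈ α := by
      refine (hmem b).2 ⟨hwb.1.trans hib, ?_⟩
      have h1 : Access P b c := Relation.ReflTransGen.single (r := fun a b => 0 < P a b) hbc
      exact h1.trans hwc.2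
    exact (ih hi hb).tail hbc

lemma class_strong_conn {α : Finset (Fin n)} (hα : IsClass P α)
    (a b : {x // x ∈ α}) :
    Relation.ReflTransGen (fun u v : {x // x ∈ α} => 0 < P u.1 v.1) a b := by
  obtain ⟨w, hw, hmem⟩ := hα
  have ha := (hmem a.1).1 a.2
  have hb := (hmem b.1).1 b.2
  have hab : Access P a.1 b.1 := ha.2.trans hb.1
  have := class_path_within (⟨w, hw, hmem⟩ : IsClass P α) a.1 b.1 hab a.2 b.2
  simpa using this

lemma exists_minimal (s : Finset (Fin n)) (hs : s.Nonempty) :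
    ∃ i ∈ s, ∀ j ∈ s, Access P i j → Access P j i := by
  classical
  obtain ⟨i, hi, hmin⟩ := Finset.exists_min_image s
    (fun a => (s.filter (fun k => Access P a k)).card) hs
  refine ⟨i, hi, fun j hj hij => ?_⟩
  by_contra hji
  have hsub : s.filter (fun k => Access P j k) ⊂ s.filter (fun k => Access P i k) := by
    constructor
    · intro k hk
      simp only [Finset.mem_filter] at hk ⊢
      exact ⟨hk.1, hij.trans hk.2⟩
    · intro hsup
      have : i ∈ s.filter (fun k => Access P j k) :=
        hsup (by simp only [Finset.mem_filter]; exact ⟨hi, Relation.ReflTransGen.refl⟩)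
      simp only [Finset.mem_filter] at this
      exact hji this.2
  have := Finset.card_lt_card hsub
  have := hmin j hj
  omega

/-- first exit of a path out of a set -/
lemma exists_boundary_edge {s : Finset (Fin n)} :
    ∀ i j : Fin n, Access P i j → i ∈ s → j ∉ s →
      ∃ b ∈ s, ∃ c, c ∉ s ∧ 0 < P b c ∧ Access P c j := by
  intro i j hpath
  induction hpath with
  | refl => intro hi hj; exact absurd hi hj
  | @tail b c hib hbc ih =>
    intro hi hj
    by_cases hb : b ∈ s
    · exact ⟨b, hb, c, hj, hbc, Relation.ReflTransGen.refl⟩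
    · obtain ⟨b', hb', c', hc', hedge, hacc⟩ := ih hi hb
      have h1 : Access P b c := Relation.ReflTransGen.single (r := fun a b => 0 < P a b) hbc
      exact ⟨b', hb', c', hc', hedge, hacc.trans h1⟩

/-- sum over subtype equals restricted sum against the extension -/
lemma sum_subtype_ext {s : Finset (Fin n)} (u : {x // x ∈ s} → ℝ) (f : Fin n → ℝ) :
    ∑ j : {x // x ∈ s}, f j.1 * u j
      = ∑ j ∈ s, f j * (if h : j ∈ s then u ⟨j, h⟩ else 0) := by
  rw [← Finset.sum_coe_sort s (fun j => f j * (if h : j ∈ s then u ⟨j, h⟩ else 0))]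
  refine Finset.sum_congr rfl fun j _ => ?_
  rw [dif_pos j.2]

end Graph

section ZLemma
variable {n : ℕ} {P : Matrix (Fin n) (Fin n) ℝ}

lemma exists_strict_subinv (hP : ∀ i j, 0 ≤ P i j) {lam : ℝ} :
    ∀ s : Finset (Fin n), (∀ i ∈ s, classOf P i ⊆ s) →
      (∀ i ∈ s, subRad P (classOf P i) < lam) →
      ∃ z : Fin n → ℝ, (∀ i ∈ s, 0 < z i) ∧ ∀ i ∈ s, ∑ j ∈ s, P i j * z j < lam * z i := by
  intro s
  induction s using Finset.strongInduction with
  | _ s ih =>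
    intro hclass hrad
    rcases s.eq_empty_or_nonempty with rfl | hne
    · exact ⟨fun _ => 1, fun i hi => absurd hi (Finset.notMem_empty i),
        fun i hi => absurd hi (Finset.notMem_empty i)⟩
    obtain ⟨i₀, hi₀, hmin⟩ := exists_minimal s hne
    set γ := classOf P i₀ with hγdef
    have hγs : γ ⊆ s := hclass i₀ hi₀
    have hi₀γ : i₀ ∈ γ := self_mem_classOf i₀
    -- PF on γ
    haveI : Nonempty {x // x ∈ γ} := ⟨⟨i₀, hi₀γ⟩⟩
    set A : Matrix {x // x ∈ γ} {x // x ∈ γ} ℝ :=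
      P.submatrix (fun i : {x // x ∈ γ} => (i : Fin n)) (fun i : {x // x ∈ γ} => (i : Fin n))
      with hAdef
    have hAnn : ∀ a b : {x // x ∈ γ}, 0 ≤ A a b := fun a b => hP a.1 b.1
    have hASC : ∀ a b : {x // x ∈ γ},
        Relation.ReflTransGen (fun u v => 0 < A u v) a b := by
      intro a b
      exact class_strong_conn (isClass_classOf i₀) a b
    obtain ⟨u, hu, hueig⟩ := pf_exists hAnn hASC
    have hradγ : rad A < lam := by
      have := hrad i₀ hi₀
      rwa [subRad_eq_rad] at this
    -- no exits from γ inside s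
    have hexit : ∀ i ∈ γ, ∀ j ∈ s, j ∉ γ → P i j = 0 := by
      intro i hiγ j hjs hjγ
      by_contra hne'
      have hpos : 0 < P i j := lt_of_le_of_ne (hP i j) (Ne.symm hne')
      have hacc : Access P i₀ j :=
        (mem_classOf.1 hiγ).1.trans (Relation.ReflTransGen.single (r := fun a b => 0 < P a b) hpos)
      have hji := hmin j hjs hacc
      exact hjγ (mem_classOf.2 ⟨hacc, hji⟩)
    set s' := s \ γ with hs'def
    have hss' : s' ⊂ s := by
      exact Finset.sdiff_ssubset hγs ⟨i₀, hi₀γ⟩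
    have hclass' : ∀ i ∈ s', classOf P i ⊆ s' := by
      intro i hi j hj
      have his := (Finset.mem_sdiff.1 hi).1
      have hiγ' := (Finset.mem_sdiff.1 hi).2
      rw [Finset.mem_sdiff]
      refine ⟨hclass i his hj, fun hjγ => ?_⟩
      have h1 : classOf P i = γ :=
        class_eq_of_mem (isClass_classOf i) (isClass_classOf i₀) hj hjγ
      exact hiγ' (h1 ▸ self_mem_classOf i)
    have hrad' : ∀ i ∈ s', subRad P (classOf P i) < lam := fun i hi =>
      hrad i (Finset.mem_sdiff.1 hi).1
    obtain ⟨z', hz'pos, hz'ineq⟩ := ih s' hss' hclass' hrad'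
    set uext : Fin n → ℝ := fun j => if h : j ∈ γ then u ⟨j, h⟩ else 0 with huext
    have huext_pos : ∀ j ∈ γ, 0 < uext j := by
      intro j hj
      rw [huext]
      simp only [dif_pos hj]
      exact hu ⟨j, hj⟩
    have hrow : ∀ (i : Fin n) (hi : i ∈ γ), ∑ j ∈ γ, P i j * uext j = rad A * u ⟨i, hi⟩ := by
      intro i hi
      rw [← sum_subtype_ext u (fun j => P i j)]
      exact hueig ⟨i, hi⟩
    -- choose ε
    have hSnn : ∀ i, 0 ≤ ∑ j ∈ γ, P i j * uext j := by
      intro i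
      refine Finset.sum_nonneg fun j hj => mul_nonneg (hP i j) (huext_pos j hj).le
    have hgpos : ∀ i ∈ s', 0 < lam * z' i - ∑ j ∈ s', P i j * z' j := by
      intro i hi
      have := hz'ineq i hi
      linarith
    obtain ⟨ε, hεpos, hεlt⟩ : ∃ ε : ℝ, 0 < ε ∧ ∀ i ∈ s',
        ε * (∑ j ∈ γ, P i j * uext j) < lam * z' i - ∑ j ∈ s', P i j * z' j := by
      rcases s'.eq_empty_or_nonempty with h | hne'
      · exact ⟨1, one_pos, fun i hi => absurd hi (h ▸ Finset.notMem_empty i)⟩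
      · obtain ⟨i₁, hi₁, hminε⟩ := Finset.exists_min_image s'
          (fun i => (lam * z' i - ∑ j ∈ s', P i j * z' j) / ((∑ j ∈ γ, P i j * uext j) + 1))
          hne'
        set ε := (lam * z' i₁ - ∑ j ∈ s', P i₁ j * z' j) / ((∑ j ∈ γ, P i₁ j * uext j) + 1)
          with hεdef
        have hεp : 0 < ε := div_pos (hgpos i₁ hi₁) (by linarith [hSnn i₁])
        refine ⟨ε, hεp, fun i hi => ?_⟩
        have h1 := hminε i hi
        have hden : 0 < (∑ j ∈ γ, P i j * uext j) + 1 := by linarith [hSnn i]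
        have h3 : ε * ((∑ j ∈ γ, P i j * uext j) + 1)
            ≤ lam * z' i - ∑ j ∈ s', P i j * z' j := (le_div_iff₀ hden).1 h1
        nlinarith [hSnn i]
    -- assemble z
    set z : Fin n → ℝ := fun j => if j ∈ γ then ε * uext j else z' j with hzdef
    have hzγ : ∀ j ∈ γ, z j = ε * uext j := fun j hj => by rw [hzdef]; simp [if_pos hj]
    have hzs' : ∀ j ∈ s', z j = z' j := by
      intro j hj
      rw [hzdef]
      simp only [if_neg (Finset.mem_sdiff.1 hj).2]
    have hsplit : ∀ i : Fin n, ∑ j ∈ s, P i j * z j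
        = ∑ j ∈ s', P i j * z' j + ∑ j ∈ γ, P i j * (ε * uext j) := by
      intro i
      rw [← Finset.sum_sdiff hγs (f := fun j => P i j * z j), ← hs'def]
      congr 1
      · exact Finset.sum_congr rfl fun j hj => by rw [hzs' j hj]
      · exact Finset.sum_congr rfl fun j hj => by rw [hzγ j hj]
    refine ⟨z, ?_, ?_⟩
    · intro i hi
      by_cases hiγ' : i ∈ γ
      · rw [hzγ i hiγ']
        exact mul_pos hεpos (huext_pos i hiγ')
      · rw [hzs' i (Finset.mem_sdiff.2 ⟨hi, hiγ'⟩)]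
        exact hz'pos i (Finset.mem_sdiff.2 ⟨hi, hiγ'⟩)
    · intro i hi
      by_cases hiγ' : i ∈ γ
      · -- row in γ
        rw [hsplit i, hzγ i hiγ']
        have hzero : ∑ j ∈ s', P i j * z' j = 0 := by
          refine Finset.sum_eq_zero fun j hj => ?_
          rw [hexit i hiγ' j (Finset.mem_sdiff.1 hj).1 (Finset.mem_sdiff.1 hj).2, zero_mul]
        rw [hzero, zero_add]
        have h1 : ∑ j ∈ γ, P i j * (ε * uext j) = ε * ∑ j ∈ γ, P i j * uext j := by
          rw [Finset.mul_sum]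
          exact Finset.sum_congr rfl fun j _ => by ring
        rw [h1, hrow i hiγ']
        have hup : 0 < u ⟨i, hiγ'⟩ := hu _
        have huexti : uext i = u ⟨i, hiγ'⟩ := by rw [huext]; simp [dif_pos hiγ']
        rw [huexti]
        have hkey := mul_pos (mul_pos hεpos hup) (sub_pos.2 hradγ)
        nlinarith [hkey]
      · -- row in s'
        have his' : i ∈ s' := Finset.mem_sdiff.2 ⟨hi, hiγ'⟩
        rw [hsplit i, hzs' i his']
        have h1 : ∑ j ∈ γ, P i j * (ε * uext j) = ε * ∑ j ∈ γ, P i j * uext j := by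
          rw [Finset.mul_sum]
          exact Finset.sum_congr rfl fun j _ => by ring
        rw [h1]
        have := hεlt i his'
        linarith

end ZLemma

section Main
variable {n : ℕ} {P : Matrix (Fin n) (Fin n) ℝ}

lemma backward_dir (hP : ∀ i j, 0 ≤ P i j) {α : Finset (Fin n)}
    (hd : IsDistinguishedClass P α) :
    ∃ x : Fin n → ℝ, x ≠ 0 ∧ (∀ i, 0 ≤ x i) ∧ P.mulVec x = (subRad P α) • x := by
  classical
  obtain ⟨hclassα, hdist⟩ := hd
  set lam := subRad P α with hlamdef
  set H : Finset (Fin n) := Finset.univ.filter (fun i => ∃ a ∈ α, Access P i a) with hHdef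
  have hmemH : ∀ i, i ∈ H ↔ ∃ a ∈ α, Access P i a := by
    intro i; simp [hHdef]
  have hαH : α ⊆ H := fun i hi => (hmemH i).2 ⟨i, hi, Relation.ReflTransGen.refl⟩
  -- PF on α
  haveI : Nonempty {x // x ∈ α} := ⟨⟨(class_nonempty hclassα).choose,
    (class_nonempty hclassα).choose_spec⟩⟩
  set A : Matrix {x // x ∈ α} {x // x ∈ α} ℝ :=
    P.submatrix (fun i : {x // x ∈ α} => (i : Fin n)) (fun i : {x // x ∈ α} => (i : Fin n))
    with hAdef
  have hAnn : ∀ a b : {x // x ∈ α}, 0 ≤ A a b := fun a b => hP a.1 b.1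
  obtain ⟨u, hu, hueig⟩ := pf_exists hAnn (class_strong_conn hclassα)
  have hradA : rad A = lam := (subRad_eq_rad P α).symm
  set R := H \ α with hRdef
  have hclassR : ∀ i ∈ R, classOf P i ⊆ R := by
    intro i hi j hj
    obtain ⟨hiH, hiα⟩ := Finset.mem_sdiff.1 hi
    obtain ⟨a, ha, hacc⟩ := (hmemH i).1 hiH
    rw [hRdef, Finset.mem_sdiff]
    constructor
    · exact (hmemH j).2 ⟨a, ha, (mem_classOf.1 hj).2.trans hacc⟩
    · intro hjα
      have h1 : classOf P i = α :=
        class_eq_of_mem (isClass_classOf i) hclassα hj hjα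
      exact hiα (h1 ▸ self_mem_classOf i)
  have hradR : ∀ i ∈ R, subRad P (classOf P i) < lam := by
    intro i hi
    obtain ⟨hiH, hiα⟩ := Finset.mem_sdiff.1 hi
    obtain ⟨a, ha, hacc⟩ := (hmemH i).1 hiH
    refine hdist (classOf P i) (isClass_classOf i) ?_ ⟨i, self_mem_classOf i, a, ha, hacc⟩
    intro h1
    exact hiα (h1 ▸ self_mem_classOf i)
  obtain ⟨z, hzpos, hzineq⟩ := exists_strict_subinv hP R hclassR hradR
  -- solve on R
  set B : Matrix {x // x ∈ R} {x // x ∈ R} ℝ :=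
    P.submatrix (fun i : {x // x ∈ R} => (i : Fin n)) (fun i : {x // x ∈ R} => (i : Fin n))
    with hBdef
  have hBnn : ∀ a b : {x // x ∈ R}, 0 ≤ B a b := fun a b => hP a.1 b.1
  set z' : {x // x ∈ R} → ℝ := fun i => z i.1 with hz'def
  have hz'pos : ∀ i : {x // x ∈ R}, 0 < z' i := fun i => hzpos i.1 i.2
  have hBz : ∀ i : {x // x ∈ R}, ∑ j, B i j * z' j < lam * z' i := by
    intro i
    have h1 : ∑ j : {x // x ∈ R}, B i j * z' j = ∑ j ∈ R, P i.1 j * z j :=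
      Finset.sum_coe_sort R (fun j => P i.1 j * z j)
    rw [h1]
    exact hzineq i.1 i.2
  set uext : Fin n → ℝ := fun j => if h : j ∈ α then u ⟨j, h⟩ else 0 with huextdef
  have huext_nn : ∀ j, 0 ≤ uext j := by
    intro j
    rw [huextdef]
    by_cases h : j ∈ α
    · simp only [dif_pos h]; exact (hu _).le
    · simp only [dif_neg h]; exact le_refl 0
  set c : {x // x ∈ R} → ℝ := fun i => ∑ a ∈ α, P i.1 a * uext a with hcdef
  have hcnn : ∀ i, 0 ≤ c i := fun i =>
    Finset.sum_nonneg fun a _ => mul_nonneg (hP i.1 a) (huext_nn a)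
  obtain ⟨w, hwnn, hweq⟩ := solve_nonneg hBnn hz'pos hBz hcnn
  -- assemble x
  set x : Fin n → ℝ := fun i => if h : i ∈ α then u ⟨i, h⟩ else
    if h' : i ∈ R then w ⟨i, h'⟩ else 0 with hxdef
  have hxα : ∀ i (h : i ∈ α), x i = u ⟨i, h⟩ := fun i h => by rw [hxdef]; simp [dif_pos h]
  have hxR : ∀ i (h : i ∈ R), x i = w ⟨i, h⟩ := by
    intro i h
    have hiα : i ∉ α := (Finset.mem_sdiff.1 h).2
    rw [hxdef]
    simp only [dif_neg hiα, dif_pos h]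
  have hxout : ∀ i, i ∉ H → x i = 0 := by
    intro i hi
    have h1 : i ∉ α := fun h => hi (hαH h)
    have h2 : i ∉ R := fun h => hi (Finset.mem_sdiff.1 h).1
    rw [hxdef]
    simp only [dif_neg h1, dif_neg h2]
  have hxnn : ∀ i, 0 ≤ x i := by
    intro i
    by_cases h : i ∈ α
    · rw [hxα i h]; exact (hu _).le
    · by_cases h' : i ∈ R
      · rw [hxR i h']; exact hwnn _
      · rw [hxdef]; simp only [dif_neg h, dif_neg h']
        exact le_refl 0
  have hrowα : ∀ (i : Fin n) (hi : i ∈ α), ∑ a ∈ α, P i a * uext a = lam * u ⟨i, hi⟩ := by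
    intro i hi
    rw [← sum_subtype_ext u (fun a => P i a)]
    have h2 := hueig ⟨i, hi⟩
    rw [hradA] at h2
    exact h2
  refine ⟨x, ?_, hxnn, ?_⟩
  · obtain ⟨a, ha⟩ := class_nonempty hclassα
    intro h0
    have := congrFun h0 a
    rw [hxα a ha] at this
    exact absurd this (hu ⟨a, ha⟩).ne'
  · funext i
    have hmv : P.mulVec x i = ∑ j, P i j * x j := rfl
    have hstep0 : ∑ j, P i j * x j = ∑ j ∈ H, P i j * x j := by
      symm
      apply Finset.sum_subset (Finset.subset_univ H)
      intro j _ hj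
      rw [hxout j hj, mul_zero]
    have hstep1 : ∑ j ∈ H, P i j * x j
        = ∑ j ∈ R, P i j * x j + ∑ j ∈ α, P i j * x j := by
      rw [hRdef, Finset.sum_sdiff hαH]
    have hxRα : ∑ j ∈ α, P i j * x j = ∑ j ∈ α, P i j * uext j := by
      refine Finset.sum_congr rfl fun j hj => ?_
      rw [hxα j hj, huextdef]
      simp only [dif_pos hj]
    rw [hmv, hstep0, hstep1, hxRα, Pi.smul_apply, smul_eq_mul]
    by_cases hiα : i ∈ α
    · -- row in α
      have hzero : ∑ j ∈ R, P i j * x j = 0 := by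
        refine Finset.sum_eq_zero fun j hj => ?_
        obtain ⟨hjH, hjα⟩ := Finset.mem_sdiff.1 hj
        obtain ⟨a, ha, hacc⟩ := (hmemH j).1 hjH
        have hPij : P i j = 0 := by
          by_contra hne'
          have hpos : 0 < P i j := lt_of_le_of_ne (hP i j) (Ne.symm hne')
          have hαi : α = classOf P i := class_eq_classOf hclassα hiα
          have haci : Access P a i := (mem_classOf.1 (hαi ▸ ha)).2
          apply hjα
          rw [hαi]
          exact mem_classOf.2
            ⟨Relation.ReflTransGen.single (r := fun a b => 0 < P a b) hpos,
             hacc.trans haci⟩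
        rw [hPij, zero_mul]
      rw [hzero, zero_add, hrowα i hiα, hxα i hiα]
    · by_cases hiR : i ∈ R
      · -- row in R
        have hsum : ∑ j ∈ R, P i j * x j = ∑ j : {x // x ∈ R}, B ⟨i, hiR⟩ j * w j := by
          rw [← Finset.sum_coe_sort R (fun j => P i j * x j)]
          refine Finset.sum_congr rfl fun j _ => ?_
          rw [hxR j.1 j.2]
          rfl
        have h2 := hweq ⟨i, hiR⟩
        have h3 : c ⟨i, hiR⟩ = ∑ j ∈ α, P i j * uext j := rfl
        rw [hsum, hxR i hiR, ← h3]
        exact h2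
      · -- row outside H
        have hiH : i ∉ H := by
          intro hiH
          rcases Finset.mem_sdiff.2 ⟨hiH, hiα⟩ with h
          exact hiR (Finset.mem_sdiff.2 ⟨hiH, hiα⟩)
        have hz1 : ∑ j ∈ R, P i j * x j = 0 := by
          refine Finset.sum_eq_zero fun j hj => ?_
          obtain ⟨hjH, _⟩ := Finset.mem_sdiff.1 hj
          obtain ⟨a, ha, hacc⟩ := (hmemH j).1 hjH
          have hPij : P i j = 0 := by
            by_contra hne'
            have hpos : 0 < P i j := lt_of_le_of_ne (hP i j) (Ne.symm hne')
            exact hiH ((hmemH i).2 ⟨a, ha,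
              (Relation.ReflTransGen.single (r := fun a b => 0 < P a b) hpos).trans hacc⟩)
          rw [hPij, zero_mul]
        have hz2 : ∑ j ∈ α, P i j * uext j = 0 := by
          refine Finset.sum_eq_zero fun j hj => ?_
          have hPij : P i j = 0 := by
            by_contra hne'
            have hpos : 0 < P i j := lt_of_le_of_ne (hP i j) (Ne.symm hne')
            exact hiH ((hmemH i).2 ⟨j, hj,
              Relation.ReflTransGen.single (r := fun a b => 0 < P a b) hpos⟩)
          rw [hPij, zero_mul]
        rw [hz1, hz2, hxout i hiH, mul_zero, add_zero]


set_option maxHeartbeats 2000000 in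
lemma forward_pos (hP : ∀ i j, 0 ≤ P i j) {lam : ℝ} (hlam : 0 < lam)
    {x : Fin n → ℝ} (hx0 : x ≠ 0) (hxnn : ∀ i, 0 ≤ x i)
    (heq : P.mulVec x = lam • x) :
    ∃ α : Finset (Fin n), IsDistinguishedClass P α ∧ subRad P α = lam := by
  classical
  have heig : ∀ i, ∑ j, P i j * x j = lam * x i := by
    intro i
    have := congrFun heq i
    simpa [Matrix.mulVec, dotProduct] using this
  have hclo : ∀ i j, Access P i j → 0 < x j → 0 < x i := by
    intro i j hpath
    induction hpath with
    | refl => exact id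
    | @tail b c hib hbc ih =>
      intro hc
      have hb : 0 < x b := by
        have h1 : P b c * x c ≤ ∑ j, P b j * x j :=
          Finset.single_le_sum (f := fun j => P b j * x j)
            (fun j _ => mul_nonneg (hP b j) (hxnn j)) (Finset.mem_univ c)
        have h2 : 0 < P b c * x c := mul_pos hbc hc
        have h3 := heig b
        nlinarith [hxnn b]
      exact ih hb
  set supp : Finset (Fin n) := Finset.univ.filter (fun i => 0 < x i) with hsuppdef
  have hsupp_ne : supp.Nonempty := by
    obtain ⟨i, hi⟩ := Function.ne_iff.1 hx0
    exact ⟨i, by simp [hsuppdef, lt_of_le_of_ne (hxnn i) (Ne.symm hi)]⟩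
  obtain ⟨i₀, hi₀, hmin⟩ := exists_minimal supp hsupp_ne
  have hxi₀ : 0 < x i₀ := by
    simp only [hsuppdef, Finset.mem_filter] at hi₀
    exact hi₀.2
  set α := classOf P i₀ with hαdef
  have hxα : ∀ i, i ∈ α → 0 < x i := fun i hi =>
    hclo i i₀ (mem_classOf.1 hi).2 hxi₀
  have hjump : ∀ i ∈ α, ∀ j, 0 < P i j → 0 < x j → j ∈ α := by
    intro i hi j hPij hxj
    have hacc : Access P i₀ j :=
      (mem_classOf.1 hi).1.trans (Relation.ReflTransGen.single (r := fun a b => 0 < P a b) hPij)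
    have hjsupp : j ∈ supp := by simp [hsuppdef, hxj]
    exact mem_classOf.2 ⟨hacc, hmin j hjsupp hacc⟩
  have hvanish : ∀ i ∈ α, ∀ j, j ∉ α → P i j * x j = 0 := by
    intro i hi j hj
    rcases (hP i j).eq_or_lt with h | h
    · rw [← h, zero_mul]
    · rcases (hxnn j).eq_or_lt with h' | h'
      · rw [← h', mul_zero]
      · exact absurd (hjump i hi j h h') hj
  have hrowa : ∀ i, ∀ hi : i ∈ α, ∑ j ∈ α, P i j * x j = lam * x i := by
    intro i hi
    rw [← heig i]
    apply Finset.sum_subset (Finset.subset_univ α)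
    intro j _ hj
    exact hvanish i hi j hj
  haveI : Nonempty {y // y ∈ α} := ⟨⟨i₀, self_mem_classOf i₀⟩⟩
  have hsubrad : subRad P α = lam := by
    set A : Matrix {x // x ∈ α} {x // x ∈ α} ℝ :=
      P.submatrix (fun i : {x // x ∈ α} => (i : Fin n)) (fun i : {x // x ∈ α} => (i : Fin n))
      with hAdef
    have hradA : subRad P α = rad A := subRad_eq_rad P α
    rw [hradA]
    refine rad_eq (A := A) (fun a b => hP a.1 b.1) (x := fun i => x i.1)
      (fun i => hxα i.1 i.2) (fun i => ?_)
    have h1 : ∑ j : {y // y ∈ α}, P i.1 j.1 * x j.1 = ∑ j ∈ α, P i.1 j * x j :=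
      Finset.sum_coe_sort α (fun j => P i.1 j * x j)
    exact h1.trans (hrowa i.1 i.2)
  refine ⟨α, ⟨isClass_classOf i₀, ?_⟩, hsubrad⟩
  intro β hβ hβα hca
  rw [hsubrad]
  obtain ⟨k, hkβ, a, haα, hka⟩ := hca
  have hxa : 0 < x a := hxα a haα
  have hxk : 0 < x k := hclo k a hka hxa
  have hβsupp : ∀ j ∈ β, 0 < x j := by
    intro j hj
    have h1 : β = classOf P j := class_eq_classOf hβ hj
    have h1' : k ∈ classOf P j := h1 ▸ hkβ
    have h2 : Access P j k := (mem_classOf.1 h1').1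
    exact hclo j k h2 hxk
  have haβ : a ∉ β := by
    intro h
    exact hβα (class_eq_of_mem hβ (isClass_classOf i₀) h haα)
  obtain ⟨b, hbβ, c, hcβ, hbc, hca'⟩ := exists_boundary_edge k a hka hkβ haβ
  have hxc : 0 < x c := hclo c a hca' hxa
  haveI : Nonempty {y // y ∈ β} := ⟨⟨k, hkβ⟩⟩
  set B : Matrix {x // x ∈ β} {x // x ∈ β} ℝ :=
    P.submatrix (fun i : {x // x ∈ β} => (i : Fin n)) (fun i : {x // x ∈ β} => (i : Fin n))
    with hBdef
  have hradB : subRad P β = rad B := subRad_eq_rad P β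
  rw [hradB]
  refine rad_lt (A := B) (fun u v => hP u.1 v.1) (class_strong_conn hβ) (x := fun i => x i.1)
    (fun i => hβsupp i.1 i.2) (lam := lam) (fun i => ?_) (i₀ := ⟨b, hbβ⟩) ?_
  · -- subinvariance rows
    have h1 : ∑ j : {y // y ∈ β}, P i.1 j.1 * x j.1 = ∑ j ∈ β, P i.1 j * x j :=
      Finset.sum_coe_sort β (fun j => P i.1 j * x j)
    have h2 : ∑ j ∈ β, P i.1 j * x j ≤ lam * x i.1 := by
      calc ∑ j ∈ β, P i.1 j * x j ≤ ∑ j, P i.1 j * x j :=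
            Finset.sum_le_sum_of_subset_of_nonneg (Finset.subset_univ β)
              (fun j _ _ => mul_nonneg (hP i.1 j) (hxnn j))
      _ = lam * x i.1 := heig i.1
    exact le_of_le_of_eq (le_of_eq h1) rfl |>.trans h2
  · -- strict row at b
    have h1 : ∑ j : {y // y ∈ β}, P b j.1 * x j.1 = ∑ j ∈ β, P b j * x j :=
      Finset.sum_coe_sort β (fun j => P b j * x j)
    have h2 : ∑ j ∈ insert c β, P b j * x j ≤ ∑ j, P b j * x j :=
      Finset.sum_le_sum_of_subset_of_nonneg (Finset.subset_univ _)
        (fun j _ _ => mul_nonneg (hP b j) (hxnn j))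
    rw [Finset.sum_insert hcβ] at h2
    have h3 : 0 < P b c * x c := mul_pos hbc hxc
    have h4 := heig b
    have h5 : ∑ j ∈ β, P b j * x j < lam * x b := by linarith
    exact lt_of_le_of_lt (le_of_eq h1) h5

lemma forward_zero (hP : ∀ i j, 0 ≤ P i j)
    {x : Fin n → ℝ} (hx0 : x ≠ 0) (hxnn : ∀ i, 0 ≤ x i)
    (heq : P.mulVec x = (0:ℝ) • x) :
    ∃ α : Finset (Fin n), IsDistinguishedClass P α ∧ subRad P α = 0 := by
  classical
  have heig : ∀ i, ∑ j, P i j * x j = 0 := by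
    intro i
    have := congrFun heq i
    simpa [Matrix.mulVec, dotProduct] using this
  have hterm : ∀ r j, P r j * x j = 0 := by
    intro r j
    have := (Finset.sum_eq_zero_iff_of_nonneg
      (fun j _ => mul_nonneg (hP r j) (hxnn j))).1 (heig r) j (Finset.mem_univ j)
    exact this
  obtain ⟨i, hi⟩ := Function.ne_iff.1 hx0
  have hxi : 0 < x i := lt_of_le_of_ne (hxnn i) (Ne.symm hi)
  have hcol : ∀ r, P r i = 0 := by
    intro r
    have := hterm r i
    exact (mul_eq_zero.1 this).resolve_right hxi.ne'
  have hacc : ∀ k, Access P k i → k = i := by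
    intro k hk
    rcases Relation.ReflTransGen.cases_tail hk with h | ⟨c, _, hci⟩
    · exact h.symm
    · exact absurd hci (by rw [hcol c]; exact lt_irrefl 0)
  set α := classOf P i with hαdef
  have hone : ∀ j ∈ α, j = i := fun j hj => hacc j (mem_classOf.1 hj).2
  haveI : Nonempty {y // y ∈ α} := ⟨⟨i, self_mem_classOf i⟩⟩
  have hsubrad : subRad P α = 0 := by
    set A : Matrix {x // x ∈ α} {x // x ∈ α} ℝ :=
      P.submatrix (fun i : {x // x ∈ α} => (i : Fin n)) (fun i : {x // x ∈ α} => (i : Fin n))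
      with hAdef
    have hradA : subRad P α = rad A := subRad_eq_rad P α
    rw [hradA]
    refine rad_eq (A := A) (fun a b => hP a.1 b.1) (x := fun _ => (1:ℝ)) (fun _ => one_pos)
      (lam := 0) (fun a => ?_)
    rw [zero_mul]
    refine Finset.sum_eq_zero fun b _ => ?_
    have hb := hone b.1 b.2
    show P a.1 b.1 * 1 = 0
    rw [hb, hcol, zero_mul]
  refine ⟨α, ⟨isClass_classOf i, ?_⟩, hsubrad⟩
  intro β hβ hne hca
  exfalso
  obtain ⟨k, hkβ, a, haα, hka⟩ := hca
  have ha := hone a haα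
  rw [ha] at hka
  have hk := hacc k hka
  rw [hk] at hkβ
  exact hne (class_eq_of_mem hβ (isClass_classOf i) hkβ (self_mem_classOf i))

theorem distinguished_eigenvalue_iff_distinguished_class' 
    (hP : ∀ i j, 0 ≤ P i j) (lam : ℝ) (hlam : 0 ≤ lam) :
    (∃ x : Fin n → ℝ, x ≠ 0 ∧ (∀ i, 0 ≤ x i) ∧ P.mulVec x = lam • x) ↔
      ∃ α : Finset (Fin n), IsDistinguishedClass P α ∧ subRad P α = lam := by
  constructor
  · rintro ⟨x, hx0, hxnn, heq⟩
    rcases hlam.eq_or_lt with h | h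
    · rw [← h] at heq
      obtain ⟨α, hd, hr⟩ := forward_zero hP hx0 hxnn heq
      exact ⟨α, hd, by rw [hr, ← h]⟩
    · exact forward_pos hP h hx0 hxnn heq
  · rintro ⟨α, hd, hr⟩
    obtain ⟨x, h1, h2, h3⟩ := backward_dir hP hd
    exact ⟨x, h1, h2, by rw [← hr]; exact h3⟩

end Main

theorem distinguished_eigenvalue_iff_distinguished_class {n : ℕ}
    (P : Matrix (Fin n) (Fin n) ℝ) (hP : ∀ i j, 0 ≤ P i j) (lam : ℝ) (hlam : 0 ≤ lam) :
    (∃ x : Fin n → ℝ, x ≠ 0 ∧ (∀ i, 0 ≤ x i) ∧ P.mulVec x = lam • x) ↔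
      ∃ α : Finset (Fin n), IsDistinguishedClass P α ∧ subRad P α = lam := by
  exact distinguished_eigenvalue_iff_distinguished_class' hP lam hlam
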